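/- arXiv:math/0502587 — 3 statements merged into one kernel-verified Lean document; each statement's English description precedes it below -/
import Mathlib

section
/- The commutator subgroup of the generalized Johnson subgroup satisfies [J(k), J(l)] ⊆ J(k+l-1); in particular [J(k), J(k)] ⊆ J(2k-1) for k ≥ 2. -/
open Subgroup

open scoped commutatorElement

/-- General three subgroups lemma relative to a normal subgroup. -/
lemma three_subgroups' {G : Type*} [Group G] {A B C N : Subgroup G} [N.Normal]
    (h1 : ⁅⁅B, C⁆, A⁆ ≤ N) (h2 : ⁅⁅C, A⁆, B⁆ ≤ N) : ⁅⁅A, B⁆, C⁆ ≤ N := by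
  have hker : ∀ {H : Subgroup G}, H.map (QuotientGroup.mk' N) = ⊥ ↔ H ≤ N := by
    intro H
    rw [Subgroup.map_eq_bot_iff, QuotientGroup.ker_mk']
  rw [← hker, Subgroup.map_commutator, Subgroup.map_commutator]
  apply Subgroup.commutator_commutator_eq_bot_of_rotate
  · rw [← Subgroup.map_commutator, ← Subgroup.map_commutator, hker]; exact h1
  · rw [← Subgroup.map_commutator, ← Subgroup.map_commutator, hker]; exact h2

/-- `⁅γ_{n+1}, γ_{m+1}⁆ ≤ γ_{n+m+2}` (0-indexed lower central series). -/
lemma lcs_commutator_le {G : Type*} [Group G] (m : ℕ) :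
    ∀ n, ⁅(⊤ : Subgroup G).lowerCentralSeries n, (⊤ : Subgroup G).lowerCentralSeries m⁆ ≤ (⊤ : Subgroup G).lowerCentralSeries (n + m + 1) := by
  induction m with
  | zero =>
    intro n
    exact le_of_eq (show (⊤ : Subgroup G).lowerCentralSeries (n + 1) = ⁅(⊤ : Subgroup G).lowerCentralSeries n, ⊤⁆ from rfl).symm
  | succ m ih =>
    intro n
    have hsucc : (⊤ : Subgroup G).lowerCentralSeries (m + 1) = ⁅(⊤ : Subgroup G).lowerCentralSeries m, ⊤⁆ := rfl
    rw [hsucc, Subgroup.commutator_comm]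
    refine three_subgroups' ?_ ?_
    · rw [Subgroup.commutator_comm (⊤ : Subgroup G),
        show ⁅(⊤ : Subgroup G).lowerCentralSeries n, (⊤ : Subgroup G)⁆ = (⊤ : Subgroup G).lowerCentralSeries (n + 1) from rfl]
      have := ih (n + 1)
      rwa [show n + 1 + m + 1 = n + (m + 1) + 1 by omega] at this
    · have := Subgroup.commutator_mono (ih n) (le_refl (⊤ : Subgroup G))
      rw [show ⁅(⊤ : Subgroup G).lowerCentralSeries (n + m + 1), (⊤ : Subgroup G)⁆ =
        (⊤ : Subgroup G).lowerCentralSeries (n + m + 1 + 1) from rfl] at this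
      rwa [show n + m + 1 + 1 = n + (m + 1) + 1 by omega] at this

/-- The subgroup of elements moved by `f` only by an element of the normal subgroup `N`. -/
def fixedModSubgroup {G : Type*} [Group G] (f : MulAut G) (N : Subgroup G) [hN : N.Normal] :
    Subgroup G where
  carrier := {w | f w * w⁻¹ ∈ N}
  one_mem' := by simpa using N.one_mem
  mul_mem' := by
    intro a b ha hb
    simp only [Set.mem_setOf_eq] at *
    have key : f (a * b) * (a * b)⁻¹ = (f a * a⁻¹) * (a * (f b * b⁻¹) * a⁻¹) := by
      rw [map_mul]; group
    rw [key]
    exact N.mul_mem ha (hN.conj_mem _ hb a)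
  inv_mem' := by
    intro a ha
    simp only [Set.mem_setOf_eq] at *
    have key : f a⁻¹ * a⁻¹⁻¹ = (a⁻¹ * (f a * a⁻¹) * a⁻¹⁻¹)⁻¹ := by
      rw [map_inv]; group
    rw [key]
    exact N.inv_mem (hN.conj_mem _ ha a⁻¹)

lemma mem_fixedModSubgroup {G : Type*} [Group G] (f : MulAut G) (N : Subgroup G) [N.Normal]
    (w : G) : w ∈ fixedModSubgroup f N ↔ f w * w⁻¹ ∈ N := Iff.rfl

/-- Commutator computation in a group with suitable commuting assumptions. -/
lemma comm_aux {Q : Type*} [Group Q] (U Y V X : Q)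
    (hUY : Commute U Y) (hUV : Commute U V) (hUX : Commute U X)
    (hYV : Commute Y V) (hVc : Commute V ⁅Y, X⁆) :
    ⁅U * Y, V * X⁆ = ⁅Y, X⁆ := by
  have hA : Commute U (Y * (V * X) * Y⁻¹) :=
    ((hUY.mul_right (hUV.mul_right hUX)).mul_right hUY.inv_right)
  calc ⁅U * Y, V * X⁆
      = U * (Y * (V * X) * Y⁻¹) * U⁻¹ * (V * X)⁻¹ := by
        rw [commutatorElement_def]; group
    _ = (Y * (V * X) * Y⁻¹) * U * U⁻¹ * (V * X)⁻¹ := by rw [hA.eq]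
    _ = Y * V * (X * Y⁻¹ * X⁻¹) * V⁻¹ := by group
    _ = V * Y * (X * Y⁻¹ * X⁻¹) * V⁻¹ := by rw [hYV.eq]
    _ = V * ⁅Y, X⁆ * V⁻¹ := by rw [commutatorElement_def]; group
    _ = ⁅Y, X⁆ * V * V⁻¹ := by rw [hVc.eq]
    _ = ⁅Y, X⁆ := by group

/-- Andreadakis' key lemma: if `f x * x⁻¹ ∈ γ_{m+1}` for all `x`, then
for `y ∈ γ_{n+1}` we have `f y * y⁻¹ ∈ γ_{m+n+1}` (0-indexed `lowerCentralSeries`). -/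
lemma johnson_key {G : Type*} [Group G] (f : MulAut G) (m : ℕ)
    (hf : ∀ x : G, f x * x⁻¹ ∈ (⊤ : Subgroup G).lowerCentralSeries m) (n : ℕ) :
    ∀ y ∈ (⊤ : Subgroup G).lowerCentralSeries n, f y * y⁻¹ ∈ (⊤ : Subgroup G).lowerCentralSeries (m + n) := by
  induction n with
  | zero => intro y _; exact hf y
  | succ n ih =>
    set N := (⊤ : Subgroup G).lowerCentralSeries (m + (n + 1)) with hNdef
    suffices hle : (⊤ : Subgroup G).lowerCentralSeries (n + 1) ≤ fixedModSubgroup f N by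
      intro y hy; exact hle hy
    have hsucc : (⊤ : Subgroup G).lowerCentralSeries (n + 1) = ⁅(⊤ : Subgroup G).lowerCentralSeries n, ⊤⁆ := rfl
    rw [hsucc, Subgroup.commutator_le]
    intro y hy x _
    rw [mem_fixedModSubgroup]
    -- pass to the quotient G/N
    set π : G →* G ⧸ N := QuotientGroup.mk' N with hπdef
    have hc : ∀ a b : G, ⁅a, b⁆ ∈ N → Commute (π a) (π b) := by
      intro a b hab
      rw [← commutatorElement_eq_one_iff_commute, ← map_commutatorElement]
      exact (QuotientGroup.eq_one_iff _).mpr hab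
    have hNcomm : ⁅(⊤ : Subgroup G).lowerCentralSeries (m + n), (⊤ : Subgroup G)⁆ = N := rfl
    have hu : f y * y⁻¹ ∈ (⊤ : Subgroup G).lowerCentralSeries (m + n) := ih y hy
    have hv : f x * x⁻¹ ∈ (⊤ : Subgroup G).lowerCentralSeries m := hf x
    have hfy : π (f y) = π (f y * y⁻¹) * π y := by rw [← map_mul]; congr 1; group
    have hfx : π (f x) = π (f x * x⁻¹) * π x := by rw [← map_mul]; congr 1; group
    have h1 : ⁅f y * y⁻¹, y⁆ ∈ N := hNcomm ▸ Subgroup.commutator_mem_commutator hu (Subgroup.mem_top y)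
    have h2 : ⁅f y * y⁻¹, f x * x⁻¹⁆ ∈ N := hNcomm ▸ Subgroup.commutator_mem_commutator hu (Subgroup.mem_top (f x * x⁻¹))
    have h3 : ⁅f y * y⁻¹, x⁆ ∈ N := hNcomm ▸ Subgroup.commutator_mem_commutator hu (Subgroup.mem_top x)
    have h4 : ⁅y, f x * x⁻¹⁆ ∈ N := by
      have := lcs_commutator_le m n (Subgroup.commutator_mem_commutator hy hv)
      rwa [show n + m + 1 = m + (n + 1) by omega] at this
    have h5 : ⁅f x * x⁻¹, ⁅y, x⁆⁆ ∈ N := by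
      have hyx : ⁅y, x⁆ ∈ (⊤ : Subgroup G).lowerCentralSeries (n + 1) := by
        rw [hsucc]; exact Subgroup.commutator_mem_commutator hy (Subgroup.mem_top x)
      have := lcs_commutator_le (n + 1) m (Subgroup.commutator_mem_commutator hv hyx)
      exact (⊤ : Subgroup G).lowerCentralSeries_antitone (show m + (n + 1) ≤ m + (n + 1) + 1 by omega) this
    suffices heq : π (f ⁅y, x⁆) = π ⁅y, x⁆ by
      have h0 : π (f ⁅y, x⁆ * ⁅y, x⁆⁻¹) = 1 := by
        rw [map_mul, map_inv, heq, mul_inv_cancel]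
      exact (QuotientGroup.eq_one_iff _).mp h0
    calc π (f ⁅y, x⁆)
        = ⁅π (f y * y⁻¹) * π y, π (f x * x⁻¹) * π x⁆ := by
          rw [map_commutatorElement, map_commutatorElement, hfy, hfx]
      _ = ⁅π y, π x⁆ := comm_aux _ _ _ _ (hc _ _ h1) (hc _ _ h2) (hc _ _ h3) (hc _ _ h4)
          (by have := hc _ _ h5; rwa [map_commutatorElement] at this)
      _ = π ⁅y, x⁆ := (map_commutatorElement _ y x).symm

/-- `F = π₁(Σ_{g,1})` is a free group of rank `2g`. -/
abbrev SurfaceGroup (g : ℕ) := FreeGroup (Fin (2 * g))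

/-- The generalized Johnson subgroup condition: an automorphism `f` lies in `J(k)`
iff it induces the identity on `F/F_k`, i.e. `f(x)·x⁻¹ ∈ F_k` for every `x`.
(The mapping class group `Γ_{g,1}` embeds in `Aut(F)` by Dehn–Nielsen, and
`J(k) = Γ_{g,1} ∩ {automorphisms acting trivially on F/F_k}`.)
In Mathlib's indexing `F_k = lowerCentralSeries F (k-1)`. -/
def InJohnson (g k : ℕ) (f : MulAut (SurfaceGroup g)) : Prop :=
  ∀ x : SurfaceGroup g, f x * x⁻¹ ∈ (⊤ : Subgroup (SurfaceGroup g)).lowerCentralSeries (k - 1)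

/-- `[J(k), J(l)] ⊆ J(k+l-1)`; in particular (taking `l = k`)
`[J(k), J(k)] ⊆ J(2k-1)` for `k ≥ 2`. -/
theorem johnson_bordism_stmt1 (g k l : ℕ) (hk : 2 ≤ k) (hl : 2 ≤ l)
    (f h : MulAut (SurfaceGroup g))
    (hf : InJohnson g k f) (hh : InJohnson g l h) :
    InJohnson g (k + l - 1) ⁅f, h⁆ := by
  unfold InJohnson at hf hh ⊢
  intro x
  have hidx : k + l - 1 - 1 = (k - 1) + (l - 1) := by omega
  rw [hidx]
  set z := f⁻¹ (h⁻¹ x) with hzdef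
  have hcomm : ⁅f, h⁆ x = f (h z) := by
    rw [commutatorElement_def, hzdef]
    rfl
  have hxeq : x = h (f z) := by
    rw [hzdef]
    simp
  rw [hcomm, hxeq]
  have ha : f z * z⁻¹ ∈ (⊤ : Subgroup (SurfaceGroup g)).lowerCentralSeries (k - 1) := hf z
  have hb : h z * z⁻¹ ∈ (⊤ : Subgroup (SurfaceGroup g)).lowerCentralSeries (l - 1) := hh z
  have hu1 : f (h z * z⁻¹) * (h z * z⁻¹)⁻¹ ∈
      (⊤ : Subgroup (SurfaceGroup g)).lowerCentralSeries ((k - 1) + (l - 1)) :=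
    johnson_key f (k - 1) hf (l - 1) _ hb
  have hu2 : h (f z * z⁻¹) * (f z * z⁻¹)⁻¹ ∈
      (⊤ : Subgroup (SurfaceGroup g)).lowerCentralSeries ((k - 1) + (l - 1)) := by
    have := johnson_key h (l - 1) hh (k - 1) _ ha
    rwa [show (l - 1) + (k - 1) = (k - 1) + (l - 1) by omega] at this
  have hcmem : ⁅h z * z⁻¹, f z * z⁻¹⁆ ∈
      (⊤ : Subgroup (SurfaceGroup g)).lowerCentralSeries ((k - 1) + (l - 1)) := by
    have := lcs_commutator_le (k - 1) (l - 1) (Subgroup.commutator_mem_commutator hb ha)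
    exact (⊤ : Subgroup (SurfaceGroup g)).lowerCentralSeries_antitone
      (show (k - 1) + (l - 1) ≤ (l - 1) + (k - 1) + 1 by omega) this
  have heq : f (h z) * (h (f z))⁻¹ =
      (f (h z * z⁻¹) * (h z * z⁻¹)⁻¹) * ⁅h z * z⁻¹, f z * z⁻¹⁆ *
        (h (f z * z⁻¹) * (f z * z⁻¹)⁻¹)⁻¹ := by
    simp only [map_mul, map_inv, commutatorElement_def]
    group
  rw [heq]
  exact mul_mem (mul_mem hu1 hcmem) (inv_mem hu2)
end

section
/- For f in the mapping class group Γ_{g,1} and m ≥ 2: f ∈ J(m) if and only if π_1(T_f^γ)/(π_1(T_f^γ))_m ≅ F/F_m via the canonical map, where π_1(T_f^γ) = ⟨α_1,...,α_{2g} | f_*(α_i)α_i^{-1}⟩. -/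
private theorem lcs_map_surj {G H : Type*} [Group G] [Group H] (f : G →* H)
    (hf : Function.Surjective f) (n : ℕ) :
    Subgroup.map f (Subgroup.lowerCentralSeries (⊤ : Subgroup G) n) = Subgroup.lowerCentralSeries (⊤ : Subgroup H) n := by
  induction n with
  | zero => simpa using Subgroup.map_top_of_surjective f hf
  | succ n ih =>
    show Subgroup.map f ⁅Subgroup.lowerCentralSeries (⊤ : Subgroup G) n, ⊤⁆ = ⁅Subgroup.lowerCentralSeries (⊤ : Subgroup H) n, ⊤⁆
    rw [Subgroup.map_commutator, ih, Subgroup.map_top_of_surjective f hf]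


/-- The fundamental group of the Dehn-filled mapping torus `T_f^γ`:
`π₁(T_f^γ) = ⟨α₁,…,α_{2g} ∣ f_*(α₁)α₁⁻¹, …, f_*(α_{2g})α_{2g}⁻¹⟩`,
i.e. `F` modulo the normal closure of the relators `f(α_i)α_i⁻¹`. -/
def MappingTorusPi1 (g : ℕ) (f : MulAut (SurfaceGroup g)) : Type _ :=
  SurfaceGroup g ⧸
    Subgroup.normalClosure
      (Set.range fun i : Fin (2 * g) => f (FreeGroup.of i) * (FreeGroup.of i)⁻¹)

instance (g : ℕ) (f : MulAut (SurfaceGroup g)) : Group (MappingTorusPi1 g f) :=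
  inferInstanceAs (Group (_ ⧸ _))

/-- The canonical projection `F → π₁(T_f^γ)`. -/
def mappingTorusProj (g : ℕ) (f : MulAut (SurfaceGroup g)) :
    SurfaceGroup g →* MappingTorusPi1 g f :=
  QuotientGroup.mk' _

/-- for a mapping class `f` (modelled, via Dehn–Nielsen, as an
automorphism of `F`) and `m ≥ 2`:  `f ∈ J(m)` (i.e. `f` acts trivially on `F/F_m`)
if and only if the canonical map `F/F_m → π₁(T_f^γ)/(π₁(T_f^γ))_m` is an
isomorphism.  In Mathlib's indexing `F_m = lowerCentralSeries F (m-1)`; the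
canonical map is induced by `F → π₁(T_f^γ) → π₁(T_f^γ)/(π₁(T_f^γ))_m`, so the
isomorphism requirement is expressed as the existence of a group isomorphism
commuting with the two canonical projections from `F`. -/
theorem johnson_bordism_stmt12 (g m : ℕ) (hm : 2 ≤ m)
    (f : MulAut (SurfaceGroup g)) :
    (∀ x : SurfaceGroup g,
        f x * x⁻¹ ∈ Subgroup.lowerCentralSeries (⊤ : Subgroup (SurfaceGroup g)) (m - 1)) ↔
      ∃ e : (SurfaceGroup g ⧸ Subgroup.lowerCentralSeries (⊤ : Subgroup (SurfaceGroup g)) (m - 1)) ≃*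
          (MappingTorusPi1 g f ⧸ Subgroup.lowerCentralSeries (⊤ : Subgroup (MappingTorusPi1 g f)) (m - 1)),
        ∀ x : SurfaceGroup g,
          e (QuotientGroup.mk x) = QuotientGroup.mk (mappingTorusProj g f x) := by
  set F := SurfaceGroup g
  set N := Subgroup.normalClosure
      (Set.range fun i : Fin (2 * g) => f (FreeGroup.of i) * (FreeGroup.of i)⁻¹) with hN
  set K := Subgroup.lowerCentralSeries (⊤ : Subgroup F) (m - 1) with hK
  set L := Subgroup.lowerCentralSeries (⊤ : Subgroup (MappingTorusPi1 g f)) (m - 1) with hLdef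
  have projsurj : Function.Surjective (mappingTorusProj g f) :=
    QuotientGroup.mk'_surjective N
  constructor
  · intro h
    -- N ≤ K
    have hNK : N ≤ K := by
      apply Subgroup.normalClosure_le_normal
      rintro _ ⟨i, rfl⟩
      exact h (FreeGroup.of i)
    set φ : F →* (MappingTorusPi1 g f ⧸ L) :=
      (QuotientGroup.mk' L).comp (mappingTorusProj g f) with hφ
    have hsurj : Function.Surjective φ :=
      (QuotientGroup.mk'_surjective L).comp projsurj
    have hmapK : Subgroup.map (mappingTorusProj g f) K = L :=
      lcs_map_surj _ projsurj _
    have hkerproj : (mappingTorusProj g f).ker = N := QuotientGroup.ker_mk' N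
    have hker : K = φ.ker := by
      rw [hφ, ← MonoidHom.comap_ker, QuotientGroup.ker_mk', ← hmapK,
        Subgroup.comap_map_eq_self (hkerproj ▸ hNK)]
    refine ⟨(QuotientGroup.quotientMulEquivOfEq hker).trans
      (QuotientGroup.quotientKerEquivOfSurjective φ hsurj), fun x => ?_⟩
    rfl
  · rintro ⟨e, he⟩ x
    have key : (mappingTorusProj g f).comp f.toMonoidHom = mappingTorusProj g f := by
      apply FreeGroup.ext_hom
      intro i
      simp only [MonoidHom.comp_apply, MulEquiv.coe_toMonoidHom]
      show QuotientGroup.mk' N (f (FreeGroup.of i)) = QuotientGroup.mk' N (FreeGroup.of i)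
      rw [QuotientGroup.mk'_eq_mk']
      have hrel : f (FreeGroup.of i) * (FreeGroup.of i)⁻¹ ∈ N :=
        Subgroup.subset_normalClosure ⟨i, rfl⟩
      have hc := (Subgroup.normalClosure_normal
        (s := Set.range fun i : Fin (2 * g) => f (FreeGroup.of i) * (FreeGroup.of i)⁻¹)).conj_mem
        _ (Subgroup.inv_mem _ hrel) (FreeGroup.of i)⁻¹
      exact ⟨(f (FreeGroup.of i))⁻¹ * FreeGroup.of i,
        by simpa [mul_assoc] using hc, by group⟩
    have hfx : mappingTorusProj g f (f x) = mappingTorusProj g f x :=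
      DFunLike.congr_fun key x
    have : e (QuotientGroup.mk (f x)) = e (QuotientGroup.mk x) := by
      rw [he, he, hfx]
    have hq : (QuotientGroup.mk (f x) : F ⧸ K) = QuotientGroup.mk x := e.injective this
    have hmem : (f x)⁻¹ * x ∈ K := by
      rwa [QuotientGroup.eq] at hq
    have h2 : x⁻¹ * f x ∈ K := by simpa using Subgroup.inv_mem _ hmem
    have := (inferInstance : K.Normal).conj_mem _ h2 (f x)
    simpa [mul_assoc] using this
end

section
/- The Arf invariant of a Z_2-quadratic form on a 2g-dimensional Z_2-symplectic space is independent of the choice of symplectic basis. -/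
open Finset
namespace JB19

def sgn (t : ZMod 2) : ℤ := if t = 0 then 1 else -1

lemma sgn_add (s t : ZMod 2) : sgn (s + t) = sgn s * sgn t := by revert s t; decide

lemma sgn_zero : sgn 0 = 1 := rfl

lemma sgn_inj {s t : ZMod 2} (h : sgn s = sgn t) : s = t := by revert h s t; decide

lemma sgn_sum {ι : Type*} (s : Finset ι) (t : ι → ZMod 2) :
    sgn (∑ i ∈ s, t i) = ∏ i ∈ s, sgn (t i) := by
  induction s using Finset.cons_induction with
  | empty => simp [sgn_zero]
  | cons a s ha ih => rw [Finset.sum_cons, Finset.prod_cons, sgn_add, ih]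

lemma factor (u v : ZMod 2) :
    (∑ p : ZMod 2 × ZMod 2, sgn (p.1 * u + p.2 * v + p.1 * p.2)) = 2 * sgn (u * v) := by
  revert u v; decide

lemma two_cases (a : ZMod 2) : a = 0 ∨ a = 1 := by revert a; decide

variable {V : Type*} [AddCommGroup V] [Module (ZMod 2) V]
variable (ω : V →ₗ[ZMod 2] V →ₗ[ZMod 2] ZMod 2)
variable (q : V → ZMod 2)

lemma omega_symm (halt : ∀ v : V, ω v v = 0) (u v : V) : ω u v = ω v u := by
  have h := halt (u + v)
  simp only [map_add, LinearMap.add_apply, halt] at h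
  have h2 : ω u v = -(ω v u) := by
    rw [eq_neg_iff_add_eq_zero]
    linear_combination h
  rw [h2, CharTwo.neg_eq]

lemma q_zero (hq : ∀ a b : V, q (a + b) = q a + q b + ω a b) : q 0 = 0 := by
  have h := hq 0 0
  simp at h
  exact h

lemma q_sum (hq : ∀ a b : V, q (a + b) = q a + q b + ω a b)
    {ι : Type*} (s : Finset ι) (w : ι → V)
    (horth : ∀ i ∈ s, ∀ j ∈ s, i ≠ j → ω (w i) (w j) = 0) :
    q (∑ i ∈ s, w i) = ∑ i ∈ s, q (w i) := by
  induction s using Finset.cons_induction with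
  | empty => simpa using q_zero ω q hq
  | cons a s ha ih =>
    rw [Finset.sum_cons, Finset.sum_cons, hq,
      ih (fun i hi j hj hij => horth i (Finset.mem_cons_of_mem hi) j (Finset.mem_cons_of_mem hj) hij)]
    have h0 : ω (w a) (∑ i ∈ s, w i) = 0 := by
      rw [map_sum]
      exact Finset.sum_eq_zero fun j hj =>
        horth a (Finset.mem_cons_self a s) j (Finset.mem_cons_of_mem hj)
          (fun h => ha (h ▸ hj))
    rw [h0, add_zero]

lemma q_combo (hq : ∀ a b : V, q (a + b) = q a + q b + ω a b)
    (a b : ZMod 2) (u v : V) (huv : ω u v = 1) :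
    q (a • u + b • v) = a * q u + b * q v + a * b := by
  rcases two_cases a with ha | ha <;> rcases two_cases b with hb | hb <;>
    subst ha <;> subst hb <;>
    simp [q_zero ω q hq, hq, huv]

section Basis

variable (g : ℕ) (x y : Fin g → V)

/-- the coordinate map for a symplectic basis -/
def phi (p : (Fin g → ZMod 2) × (Fin g → ZMod 2)) : V :=
  ∑ i, p.1 i • x i + ∑ i, p.2 i • y i

lemma phi_inj
    (hyy : ∀ i j, ω (y i) (y j) = 0)
    (hxy : ∀ i j, ω (x i) (y j) = if i = j then 1 else 0)
    (hxx : ∀ i j, ω (x i) (x j) = 0) :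
    Function.Injective (phi g x y) := by
  have key1 : ∀ p, ∀ j, ω (phi g x y p) (y j) = p.1 j := by
    intro p j
    simp only [phi, map_add, map_sum, map_smul, LinearMap.add_apply, LinearMap.sum_apply,
      LinearMap.smul_apply, hxy, hyy, smul_eq_mul, mul_ite, mul_one, mul_zero]
    simp [Finset.sum_ite_eq']
  have key2 : ∀ p, ∀ j, ω (x j) (phi g x y p) = p.2 j := by
    intro p j
    simp only [phi, map_add, map_sum, map_smul, hxy, hxx, smul_eq_mul, mul_ite, mul_one, mul_zero]
    simp [Finset.sum_ite_eq']
  intro p p' h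
  ext j
  · rw [← key1 p j, ← key1 p' j, h]
  · rw [← key2 p j, ← key2 p' j, h]

lemma phi_surj
    (hspan : Submodule.span (ZMod 2) (Set.range x ∪ Set.range y) = ⊤) :
    Function.Surjective (phi g x y) := by
  intro v
  have hv : v ∈ Submodule.span (ZMod 2) (Set.range (Sum.elim x y)) := by
    rw [Set.Sum.elim_range, hspan]; trivial
  rw [Submodule.mem_span_range_iff_exists_fun] at hv
  obtain ⟨c, hc⟩ := hv
  refine ⟨(fun i => c (Sum.inl i), fun i => c (Sum.inr i)), ?_⟩
  rw [phi, ← hc, Fintype.sum_sum_type]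
  simp

lemma q_phi (halt : ∀ v : V, ω v v = 0)
    (hq : ∀ a b : V, q (a + b) = q a + q b + ω a b)
    (hxx : ∀ i j, ω (x i) (x j) = 0) (hyy : ∀ i j, ω (y i) (y j) = 0)
    (hxy : ∀ i j, ω (x i) (y j) = if i = j then 1 else 0)
    (p : (Fin g → ZMod 2) × (Fin g → ZMod 2)) :
    q (phi g x y p) = ∑ i, (p.1 i * q (x i) + p.2 i * q (y i) + p.1 i * p.2 i) := by
  have hyx : ∀ i j, ω (y i) (x j) = if j = i then 1 else 0 := by
    intro i j; rw [← omega_symm ω halt, hxy]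
  rw [phi, ← Finset.sum_add_distrib]
  rw [q_sum ω q hq _ (fun i => p.1 i • x i + p.2 i • y i) ?_]
  · apply Finset.sum_congr rfl
    intro i _
    exact q_combo ω q hq _ _ _ _ (by simp [hxy])
  · intro i _ j _ hij
    simp only [map_add, map_smul, LinearMap.add_apply, LinearMap.smul_apply,
      hxx, hyy, hxy, hyx, if_neg hij, if_neg (Ne.symm hij), smul_eq_mul]
    ring

lemma basis_sum (halt : ∀ v : V, ω v v = 0)
    (hq : ∀ a b : V, q (a + b) = q a + q b + ω a b)
    (hxx : ∀ i j, ω (x i) (x j) = 0) (hyy : ∀ i j, ω (y i) (y j) = 0)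
    (hxy : ∀ i j, ω (x i) (y j) = if i = j then 1 else 0) :
    (∑ p : (Fin g → ZMod 2) × (Fin g → ZMod 2), sgn (q (phi g x y p)))
      = 2 ^ g * sgn (∑ i, q (x i) * q (y i)) := by
  have step1 : ∀ p : (Fin g → ZMod 2) × (Fin g → ZMod 2),
      sgn (q (phi g x y p)) = ∏ i, sgn (p.1 i * q (x i) + p.2 i * q (y i) + p.1 i * p.2 i) := by
    intro p
    rw [q_phi ω q g x y halt hq hxx hyy hxy, sgn_sum]
  simp only [step1]
  -- reindex: pairs of functions ≃ functions to pairs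
  rw [← Equiv.sum_comp (Equiv.arrowProdEquivProdArrow (Fin g) (fun _ => ZMod 2) (fun _ => ZMod 2))
    (fun p : (Fin g → ZMod 2) × (Fin g → ZMod 2) =>
    ∏ i, sgn (p.1 i * q (x i) + p.2 i * q (y i) + p.1 i * p.2 i))]
  simp only [Equiv.arrowProdEquivProdArrow, Equiv.coe_fn_mk]
  have key := Finset.prod_univ_sum (fun _ : Fin g => (Finset.univ : Finset (ZMod 2 × ZMod 2)))
    (fun i p => sgn (p.1 * q (x i) + p.2 * q (y i) + p.1 * p.2))
  rw [Fintype.piFinset_univ] at key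
  rw [← key]
  have : ∀ i : Fin g, (∑ p : ZMod 2 × ZMod 2,
      sgn (p.1 * q (x i) + p.2 * q (y i) + p.1 * p.2)) = 2 * sgn (q (x i) * q (y i)) :=
    fun i => factor (q (x i)) (q (y i))
  simp only [this]
  rw [Finset.prod_mul_distrib, Finset.prod_const, Finset.card_univ, Fintype.card_fin,
    ← sgn_sum]

end Basis
end JB19

/-- the Arf invariant of a `ℤ₂`-quadratic form on a `2g`-dimensional
symplectic `ℤ₂`-vector space does not depend on the choice of symplectic basis:
if `{xᵢ, yᵢ}` and `{xᵢ', yᵢ'}` are symplectic bases (pairwise pairings `ω(xᵢ,xⱼ) =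
ω(yᵢ,yⱼ) = 0`, `ω(xᵢ,yⱼ) = δᵢⱼ`, and each family spans `V`) and `q` is quadratic
with respect to the (alternating) form `ω` (i.e. `q(a+b) = q(a) + q(b) + ω(a,b)`),
then `Σᵢ q(xᵢ)q(yᵢ) = Σᵢ q(xᵢ')q(yᵢ')`. -/
theorem johnson_bordism_stmt19 {V : Type*} [AddCommGroup V] [Module (ZMod 2) V]
    (g : ℕ) (ω : V →ₗ[ZMod 2] V →ₗ[ZMod 2] ZMod 2)
    (halt : ∀ v : V, ω v v = 0)
    (q : V → ZMod 2) (hq : ∀ a b : V, q (a + b) = q a + q b + ω a b)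
    (x y x' y' : Fin g → V)
    (hxx : ∀ i j, ω (x i) (x j) = 0) (hyy : ∀ i j, ω (y i) (y j) = 0)
    (hxy : ∀ i j, ω (x i) (y j) = if i = j then 1 else 0)
    (hxx' : ∀ i j, ω (x' i) (x' j) = 0) (hyy' : ∀ i j, ω (y' i) (y' j) = 0)
    (hxy' : ∀ i j, ω (x' i) (y' j) = if i = j then 1 else 0)
    (hspan : Submodule.span (ZMod 2) (Set.range x ∪ Set.range y) = ⊤)
    (hspan' : Submodule.span (ZMod 2) (Set.range x' ∪ Set.range y') = ⊤) :
    ∑ i : Fin g, q (x i) * q (y i) = ∑ i : Fin g, q (x' i) * q (y' i) := by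
  have hb : Function.Bijective (JB19.phi g x y) :=
    ⟨JB19.phi_inj ω g x y hyy hxy hxx, JB19.phi_surj g x y hspan⟩
  have hb' : Function.Bijective (JB19.phi g x' y') :=
    ⟨JB19.phi_inj ω g x' y' hyy' hxy' hxx', JB19.phi_surj g x' y' hspan'⟩
  set e1 := Equiv.ofBijective _ hb with he1
  set e2 := Equiv.ofBijective _ hb' with he2
  have key : (∑ p : (Fin g → ZMod 2) × (Fin g → ZMod 2), JB19.sgn (q (JB19.phi g x y p)))
      = ∑ p : (Fin g → ZMod 2) × (Fin g → ZMod 2), JB19.sgn (q (JB19.phi g x' y' p)) := by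
    rw [← Equiv.sum_comp (e1.trans e2.symm)
      (fun p => JB19.sgn (q (JB19.phi g x' y' p)))]
    apply Finset.sum_congr rfl
    intro p _
    have : JB19.phi g x' y' ((e1.trans e2.symm) p) = JB19.phi g x y p := by
      show e2 (e2.symm (e1 p)) = _
      rw [Equiv.apply_symm_apply]
      rfl
    rw [this]
  rw [JB19.basis_sum ω q g x y halt hq hxx hyy hxy,
    JB19.basis_sum ω q g x' y' halt hq hxx' hyy' hxy'] at key
  exact JB19.sgn_inj (mul_left_cancel₀ (pow_ne_zero g two_ne_zero) key)
end
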